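/- arXiv:1203.1449 — 6 statements merged into one kernel-verified Lean document; each statement's English description precedes it below -/
import Mathlib

section
/- Let R be a Noetherian commutative ring with an endomorphism σ such that R has no nontrivial ideals I with σ(I) ⊆ I (i.e., R is σ-simple). Then R is reduced, and the σ-constants R^σ = {r : σ(r) = r} form a field. -/
/-!
The nilradical and, for a `σ`-constant `c`, the principal ideal `(c)` are `σ`-stable, so by
`σ`-simplicity each is `0` or `R`. The nilradical is not `R` because `0 ≠ R`, so `R` is reduced;
a nonzero constant `c` generates `R`, so it is a unit of `R`, and its inverse is again a constant
because `σ` preserves inverses.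
-/

section SigmaStable

variable {R : Type*} [CommRing R] (σ : R →+* R)

theorem map_mem_nilradical {x : R} (hx : x ∈ nilradical R) : σ x ∈ nilradical R :=
  mem_nilradical.mpr ((mem_nilradical.mp hx).map σ)

theorem map_mem_span_singleton_of_map_eq {c x : R} (hc : σ c = c)
    (hx : x ∈ Ideal.span {c}) : σ x ∈ Ideal.span {c} := by
  obtain ⟨r, rfl⟩ := Ideal.mem_span_singleton'.mp hx
  rw [map_mul, hc]
  exact Ideal.mul_mem_left _ _ (Ideal.mem_span_singleton_self c)

theorem map_inv_eq_of_map_eq {u : Rˣ} (hu : σ u = u) : σ ↑u⁻¹ = ↑u⁻¹ :=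
  (u.inv_eq_of_mul_eq_one_left (by rw [← hu, ← map_mul, u.inv_mul, map_one])).symm

theorem isField_eqLocus_of_isUnit [Nontrivial R]
    (h : ∀ c : R, σ c = c → c ≠ 0 → IsUnit c) : IsField (σ.eqLocus (RingHom.id R)) where
  exists_pair_ne := ⟨0, 1, zero_ne_one⟩
  mul_comm := mul_comm
  mul_inv_cancel := by
    rintro ⟨c, hc⟩ hne
    obtain ⟨u, rfl⟩ := h c hc (by simpa using hne)
    exact ⟨⟨↑u⁻¹, map_inv_eq_of_map_eq σ hc⟩, Subtype.ext u.mul_inv⟩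

end SigmaStable

theorem sigma_simple_noetherian_reduced_constants_field_general
    (R : Type*) [CommRing R] (σ : R →+* R)
    (hnt : (⊥ : Ideal R) ≠ ⊤)
    (hsimple : ∀ I : Ideal R, (∀ x ∈ I, σ x ∈ I) → I = ⊥ ∨ I = ⊤) :
    IsReduced R ∧ IsField (RingHom.eqLocus σ (RingHom.id R)) := by
  have : Nontrivial R := (Submodule.nontrivial_iff R).mp ⟨⊥, ⊤, hnt⟩
  refine ⟨?_, isField_eqLocus_of_isUnit σ fun c hc hc0 => ?_⟩
  · rcases hsimple _ fun x => map_mem_nilradical σ with h | h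
    · exact nilradical_eq_bot_iff.mp h
    · exact absurd (Ideal.radical_eq_top.mp h) hnt
  · rcases hsimple _ fun x => map_mem_span_singleton_of_map_eq σ hc with h | h
    · exact absurd (Ideal.span_singleton_eq_bot.mp h) hc0
    · exact Ideal.span_singleton_eq_top.mp h

/-- A Noetherian commutative ring `R` with an endomorphism `σ` that is `σ`-simple
(no nontrivial ideals `I` with `σ(I) ⊆ I`) is reduced, and its `σ`-constants
`{r : σ(r) = r}` form a field. -/
theorem sigma_simple_noetherian_reduced_constants_field
    (R : Type*) [CommRing R] [IsNoetherianRing R] (σ : R →+* R)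
    (hnt : (⊥ : Ideal R) ≠ ⊤)
    (hsimple : ∀ I : Ideal R, (∀ x ∈ I, σ x ∈ I) → I = ⊥ ∨ I = ⊤) :
    IsReduced R ∧ IsField (RingHom.eqLocus σ (RingHom.id R)) :=
  sigma_simple_noetherian_reduced_constants_field_general R σ hnt hsimple
end

section
/- Let K be a difference field, A ∈ GLₙ(K), and R = K[Y_ij, 1/det Y] a K-σ-algebra generated by a fundamental solution matrix Y ∈ GLₙ(R) with σ(Y) = A·Y. Then every element of R is σ-finite over K, i.e., satisfies a linear difference equation with coefficients in K. -/
/-! The elements of `R` that are σ-finite over `K` form a `K`-subalgebra: if `f ∈ V` and `g ∈ W`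
with `V`, `W` finite-dimensional and σ-stable, then `f + g ∈ V ⊔ W` and `f * g ∈ V * W`, both again
finite-dimensional and σ-stable. So it suffices to check the generators. The entries of `Y` span a
σ-stable space because `σ(Y) = AY`, and `1 / det Y` spans one because `σ(det Y) = det A · det Y`. -/

/-- `f` is σ-finite over `K`: it lies in a finite-dimensional `K`-subspace of `R`
stable under `σ`. -/
def IsSigmaFinite {K R : Type*} [Field K] [CommRing R] [Algebra K R]
    (σR : R →+* R) (f : R) : Prop :=
  ∃ V : Submodule K R, V.FG ∧ f ∈ V ∧ ∀ x ∈ V, σR x ∈ V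

open Set Submodule

section SigmaFinite

variable {K R : Type*} [Field K] [CommRing R] [Algebra K R] {σK : K →+* K} {σR : R →+* R}

theorem mapsTo_sup {V W : Submodule K R} (hV : MapsTo σR V V) (hW : MapsTo σR W W) :
    MapsTo σR ↑(V ⊔ W) ↑(V ⊔ W) := by
  intro x hx
  obtain ⟨y, hy, z, hz, rfl⟩ := mem_sup.mp hx
  rw [map_add]
  exact add_mem (mem_sup_left (hV hy)) (mem_sup_right (hW hz))

theorem mapsTo_mul {V W : Submodule K R} (hV : MapsTo σR V V) (hW : MapsTo σR W W) :
    MapsTo σR ↑(V * W) ↑(V * W) := by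
  intro x hx
  refine Submodule.mul_induction_on (C := fun x => σR x ∈ V * W) hx ?_ ?_
  · intro y hy z hz
    rw [map_mul]
    exact mul_mem_mul (hV hy) (hW hz)
  · intro y z hy hz
    rw [map_add]
    exact add_mem hy hz

theorem mapsTo_span_of_mapsTo (hsmul : ∀ (c : K) (x : R), σR (c • x) = σK c • σR x) {S : Set R}
    (hS : MapsTo σR S (span K S)) : MapsTo σR (span K S) (span K S) := by
  intro x hx
  induction hx using span_induction with
  | mem y hy => exact hS hy
  | zero => simp
  | add y z _ _ hy hz => rw [map_add]; exact add_mem hy hz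
  | smul c y _ hy => rw [hsmul]; exact smul_mem _ _ hy

theorem IsSigmaFinite.add {f g : R} (hf : IsSigmaFinite (K := K) σR f)
    (hg : IsSigmaFinite (K := K) σR g) : IsSigmaFinite (K := K) σR (f + g) := by
  obtain ⟨V, hVfg, hfV, hV⟩ := hf
  obtain ⟨W, hWfg, hgW, hW⟩ := hg
  exact ⟨V ⊔ W, hVfg.sup hWfg, add_mem (mem_sup_left hfV) (mem_sup_right hgW), mapsTo_sup hV hW⟩

theorem IsSigmaFinite.mul {f g : R} (hf : IsSigmaFinite (K := K) σR f)
    (hg : IsSigmaFinite (K := K) σR g) : IsSigmaFinite (K := K) σR (f * g) := by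
  obtain ⟨V, hVfg, hfV, hV⟩ := hf
  obtain ⟨W, hWfg, hgW, hW⟩ := hg
  exact ⟨V * W, hVfg.mul hWfg, mul_mem_mul hfV hgW, mapsTo_mul hV hW⟩

theorem isSigmaFinite_of_mem_span (hsmul : ∀ (c : K) (x : R), σR (c • x) = σK c • σR x)
    {S : Set R} (hSfin : S.Finite) (hS : MapsTo σR S (span K S)) {f : R} (hf : f ∈ span K S) :
    IsSigmaFinite (K := K) σR f :=
  ⟨span K S, fg_span hSfin, hf, mapsTo_span_of_mapsTo hsmul hS⟩

theorem isSigmaFinite_algebraMap (hsmul : ∀ (c : K) (x : R), σR (c • x) = σK c • σR x) (c : K) :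
    IsSigmaFinite (K := K) σR (algebraMap K R c) := by
  refine isSigmaFinite_of_mem_span hsmul (finite_singleton 1) ?_ ?_
  · rintro _ rfl
    rw [map_one]
    exact mem_span_singleton_self 1
  · rw [Algebra.algebraMap_eq_smul_one]
    exact smul_mem _ _ (mem_span_singleton_self 1)

variable (σR) in
def sigmaFiniteSubalgebra (hsmul : ∀ (c : K) (x : R), σR (c • x) = σK c • σR x) :
    Subalgebra K R where
  carrier := {f | IsSigmaFinite (K := K) σR f}
  add_mem' := IsSigmaFinite.add
  mul_mem' := IsSigmaFinite.mul
  algebraMap_mem' := isSigmaFinite_algebraMap hsmul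

theorem isSigmaFinite_of_adjoin_eq_top (hsmul : ∀ (c : K) (x : R), σR (c • x) = σK c • σR x)
    {S : Set R} (hS : Algebra.adjoin K S = ⊤) (hgen : ∀ s ∈ S, IsSigmaFinite (K := K) σR s)
    (f : R) : IsSigmaFinite (K := K) σR f := by
  have hle : Algebra.adjoin K S ≤ sigmaFiniteSubalgebra σR hsmul := Algebra.adjoin_le hgen
  exact hle (hS ▸ Algebra.mem_top)

theorem map_ringInverse_of_map_eq_smul {u : R} {a : K} (hu : IsUnit u) (ha : a ≠ 0)
    (h : σR u = a • u) : σR (Ring.inverse u) = a⁻¹ • Ring.inverse u := by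
  refine left_inv_eq_right_inv (a := σR u) ?_ ?_
  · rw [← map_mul, Ring.inverse_mul_cancel _ hu, map_one]
  · rw [h, smul_mul_smul_comm, mul_inv_cancel₀ ha, one_smul, Ring.mul_inverse_cancel _ hu]

end SigmaFinite

section FundamentalMatrix

variable {K R ι : Type*} [Field K] [CommRing R] [Algebra K R] [Fintype ι]
  {σR : R →+* R} {A : Matrix ι ι K} {Y : Matrix ι ι R}

theorem mapsTo_entries_span_of_map_eq_mul (hfs : Y.map σR = A.map (algebraMap K R) * Y) :
    MapsTo σR (range fun p : ι × ι => Y p.1 p.2)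
      (span K (range fun p : ι × ι => Y p.1 p.2)) := by
  rintro _ ⟨⟨i, j⟩, rfl⟩
  have hij : σR (Y i j) = ∑ k, A i k • Y k j := by
    simpa only [Matrix.map_apply, Matrix.mul_apply, Algebra.smul_def] using congrFun₂ hfs i j
  rw [hij]
  exact sum_mem fun k _ => smul_mem _ _ (subset_span ⟨(k, j), rfl⟩)

theorem map_det_of_map_eq_mul [DecidableEq ι] (hfs : Y.map σR = A.map (algebraMap K R) * Y) :
    σR Y.det = A.det • Y.det := by
  rw [RingHom.map_det, RingHom.mapMatrix_apply, hfs, Matrix.det_mul, ← RingHom.mapMatrix_apply,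
    ← RingHom.map_det, Algebra.smul_def]

end FundamentalMatrix

/-- If `R = K[Y_ij, 1/det Y]` is generated over the difference field `K` by a fundamental
solution matrix `Y` of `σ(y) = Ay` (with `A ∈ GLₙ(K)`), then every element of `R` is
σ-finite over `K`, i.e. satisfies a linear difference equation over `K`. -/
theorem picardVessiot_ring_elements_sigmaFinite
    (K R : Type*) [Field K] [CommRing R] [Algebra K R]
    (σK : K →+* K) (σR : R →+* R)
    (hcomp : ∀ (a : K) (r : R), σR (algebraMap K R a * r) = algebraMap K R (σK a) * σR r)
    (n : ℕ) (A : Matrix (Fin n) (Fin n) K) (hAdet : IsUnit A.det)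
    (Y : Matrix (Fin n) (Fin n) R) (hYdet : IsUnit Y.det)
    (hfs : Y.map σR = A.map (algebraMap K R) * Y)
    (hgen : Algebra.adjoin K
        ((Set.range fun p : Fin n × Fin n => Y p.1 p.2) ∪ {Ring.inverse Y.det}) = ⊤) :
    ∀ f : R, IsSigmaFinite (K := K) σR f := by
  have hsmul : ∀ (c : K) (x : R), σR (c • x) = σK c • σR x := fun c x => by
    rw [Algebra.smul_def, hcomp, ← Algebra.smul_def]
  refine isSigmaFinite_of_adjoin_eq_top hsmul hgen ?_
  rintro _ (⟨⟨i, j⟩, rfl⟩ | rfl)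
  · exact isSigmaFinite_of_mem_span hsmul (finite_range _)
      (mapsTo_entries_span_of_map_eq_mul hfs) (subset_span ⟨(i, j), rfl⟩)
  · refine isSigmaFinite_of_mem_span hsmul (finite_singleton _) ?_ (mem_span_singleton_self _)
    rintro _ rfl
    rw [map_ringInverse_of_map_eq_smul hYdet hAdet.ne_zero (map_det_of_map_eq_mul hfs)]
    exact smul_mem _ _ (mem_span_singleton_self _)
end

section
/- Let k be a field of characteristic zero. The natural k̄-algebra homomorphism Seq_k ⊗_k k̄ → Seq_{k̄} (where k̄ is an algebraic closure of k) is injective. -/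
/-!
Choose a `k`-basis `(bᵢ)` of the extension. Every tensor is a finite sum `∑ bᵢ ⊗ gᵢ`, and its image
is the germ of `n ↦ ∑ gᵢ(n) • bᵢ`. If that germ vanishes, then for all large `n` the sum vanishes,
so by linear independence every `gᵢ(n)` vanishes for large `n`, i.e. every `gᵢ` is zero.
-/

open Filter TensorProduct

/-- The ring of `k`-valued sequences modulo eventual equality. -/
abbrev SeqRing (k : Type*) [CommRing k] : Type _ := Filter.Germ (Filter.atTop : Filter ℕ) k

noncomputable instance {k : Type*} [CommRing k] : Algebra k (SeqRing k) :=
  ((Filter.Germ.coeRingHom _).comp (Pi.constRingHom ℕ k)).toAlgebra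

noncomputable instance {k : Type*} [Field k] :
    Semiring ((AlgebraicClosure k) ⊗[k] (SeqRing k)) :=
  Algebra.TensorProduct.instSemiring

theorem LinearIndependent.eventually_eq_zero_of_eventually_sum_smul {α ι R V : Type*} [Ring R]
    [AddCommGroup V] [Module R V] {l : Filter α} {v : ι → V} (hv : LinearIndependent R v)
    {s : Finset ι} {f : ι → α → R} (h : ∀ᶠ a in l, ∑ i ∈ s, f i a • v i = 0) :
    ∀ i ∈ s, f i =ᶠ[l] 0 :=
  fun i hi => h.mono fun a ha => linearIndependent_iff'.mp hv s (f · a) ha i hi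

theorem Filter.Germ.coe_finset_sum {α ι M : Type*} [AddCommMonoid M] {l : Filter α}
    (s : Finset ι) (F : ι → α → M) :
    ((fun a => ∑ i ∈ s, F i a : α → M) : Germ l M) = ∑ i ∈ s, (F i : Germ l M) := by
  rw [← Finset.sum_fn]
  exact map_sum (Germ.coeAddHom l) F s

theorem Filter.Germ.injective_of_map_tmul_coe {α k K : Type*} [Field k] [Ring K] [Algebra k K]
    {l : Filter α} (Φ : K ⊗[k] Germ l k →+ Germ l K)
    (hΦ : ∀ (c : K) (f : α → k),
      Φ (c ⊗ₜ (f : Germ l k)) = ((fun a => c * algebraMap k K (f a)) : Germ l K)) :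
    Function.Injective Φ := by
  classical
  rw [injective_iff_map_eq_zero]
  intro x hx
  let b := Module.Basis.ofVectorSpace k K
  obtain ⟨g, rfl⟩ := TensorProduct.eq_repr_basis_left b x
  choose f hf using fun i =>
    Germ.inductionOn (g i) (p := fun φ => ∃ f : α → k, (f : Germ l k) = φ) fun f => ⟨f, rfl⟩
  have hΦg : Φ (g.sum fun i m => b i ⊗ₜ m) =
      ((fun a => ∑ i ∈ g.support, f i a • b i : α → K) : Germ l K) := by
    simp only [Finsupp.sum, map_sum, ← hf, hΦ, Germ.coe_finset_sum, Algebra.smul_def,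
      Algebra.commutes]
  rw [hΦg, ← Germ.coe_zero, Germ.coe_eq] at hx
  have hf0 := b.linearIndependent.eventually_eq_zero_of_eventually_sum_smul hx
  have hg : g = 0 := by
    ext i
    by_contra hi
    exact hi ((hf i).symm.trans (Germ.coe_eq.mpr (hf0 i (Finsupp.mem_support_iff.mpr hi))))
  simp [hg]

theorem seq_tensor_algebraicClosure_injective_general (k : Type*) [Field k]
    (Φ : (AlgebraicClosure k) ⊗[k] (SeqRing k) →+* SeqRing (AlgebraicClosure k))
    (hΦ : ∀ (c : AlgebraicClosure k) (f : ℕ → k),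
      Φ (c ⊗ₜ (f : SeqRing k)) =
        ((fun i : ℕ => c * algebraMap k (AlgebraicClosure k) (f i)) : SeqRing (AlgebraicClosure k))) :
    Function.Injective Φ :=
  Filter.Germ.injective_of_map_tmul_coe Φ.toAddMonoidHom hΦ

/-- The natural `k̄`-algebra homomorphism `Seq_k ⊗_k k̄ → Seq_{k̄}`, sending `c ⊗ f` to the
sequence `i ↦ c·f(i)`, is injective. -/
theorem seq_tensor_algebraicClosure_injective (k : Type*) [Field k] [CharZero k]
    (Φ : (AlgebraicClosure k) ⊗[k] (SeqRing k) →+* SeqRing (AlgebraicClosure k))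
    (hΦ : ∀ (c : AlgebraicClosure k) (f : ℕ → k),
      Φ (c ⊗ₜ (f : SeqRing k)) =
        ((fun i : ℕ => c * algebraMap k (AlgebraicClosure k) (f i)) : SeqRing (AlgebraicClosure k))) :
    Function.Injective Φ :=
  seq_tensor_algebraicClosure_injective_general k Φ hΦ
end

section
/- Let L be a commutative ring with endomorphism σ, and suppose there exist orthogonal idempotents e₀, …, e_{l-1} ∈ L with e₀ + ⋯ + e_{l-1} = 1, σ(eⱼ) = e_{j+1 mod l}, and each eⱼL a field. Then L is σ-simple (the only ideals I of L with σ(I) ⊆ I are 0 and L), L is Noetherian, and every non-zero divisor of L is a unit. -/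
/-! Every ideal `I` is spanned by the `e j` it contains: writing `x = ∑ x * e j`, each nonzero
component `x * e j` is invertible in the field `e j * L`, which puts `e j` into `I`. Hence `L` is
Noetherian, and a nonzero σ-stable ideal contains some `e j` and then, `σ` permuting the `e j`
cyclically, all of them and so `1`. For a non-zero divisor `x`, each `e j` is a multiple of `x`
(either `e j = 0` or `x * e j` is invertible in `e j * L`), hence so is `1 = ∑ e j`. -/

namespace SigmaPseudoField

section Idempotents

variable {L ι : Type*} [CommRing L] {e : ι → L}

theorem eq_sum_mul [Fintype ι] (hsum : ∑ j, e j = 1) (x : L) : x = ∑ j, x * e j := by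
  rw [← Finset.mul_sum, hsum, mul_one]

variable (hfield : ∀ j, ∀ x : L, x * e j ≠ 0 → ∃ y : L, (x * e j) * (y * e j) = e j)
include hfield

theorem mem_of_mul_ne_zero {I : Ideal L} {x : L} (hx : x ∈ I) {j : ι} (hxj : x * e j ≠ 0) :
    e j ∈ I := by
  obtain ⟨y, hy⟩ := hfield j x hxj
  exact hy ▸ I.mul_mem_right _ (I.mul_mem_right _ hx)

theorem exists_mul_eq_of_mem_nonZeroDivisors {x : L} (hx : x ∈ nonZeroDivisors L) (j : ι) :
    ∃ z, x * z = e j := by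
  by_cases hxj : x * e j = 0
  · exact ⟨0, by rw [mul_zero, hx.2 (e j) (by rwa [mul_comm])]⟩
  · obtain ⟨y, hy⟩ := hfield j x hxj
    exact ⟨e j * (y * e j), by linear_combination hy⟩

variable [Fintype ι]

theorem ideal_eq_span (hsum : ∑ j, e j = 1) (I : Ideal L) :
    I = Ideal.span (e '' {j | e j ∈ I}) := by
  refine le_antisymm (fun x hx => ?_) (Ideal.span_le.mpr (by rintro _ ⟨j, hj, rfl⟩; exact hj))
  rw [eq_sum_mul hsum x]
  refine Ideal.sum_mem _ fun j _ => ?_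
  by_cases hxj : x * e j = 0
  · rw [hxj]
    exact Ideal.zero_mem _
  · exact Ideal.mul_mem_left _ _
      (Ideal.subset_span ⟨j, mem_of_mul_ne_zero hfield hx hxj, rfl⟩)

theorem isNoetherianRing (hsum : ∑ j, e j = 1) : IsNoetherianRing L :=
  (isNoetherianRing_iff_ideal_fg L).mpr fun I =>
    Submodule.fg_def.mpr ⟨_, (Set.toFinite _).image e, (ideal_eq_span hfield hsum I).symm⟩

theorem exists_mem_of_ne_bot (hsum : ∑ j, e j = 1) {I : Ideal L} (hI : I ≠ ⊥) :
    ∃ j, e j ∈ I := by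
  rw [ideal_eq_span hfield hsum I, Ne, Ideal.span_eq_bot] at hI
  push Not at hI
  obtain ⟨_, ⟨j, hj, rfl⟩, -⟩ := hI
  exact ⟨j, hj⟩

theorem isUnit_of_mem_nonZeroDivisors (hsum : ∑ j, e j = 1) {x : L}
    (hx : x ∈ nonZeroDivisors L) : IsUnit x := by
  choose z hz using exists_mul_eq_of_mem_nonZeroDivisors hfield hx
  exact IsUnit.of_mul_eq_one (∑ j, z j) (by simp only [Finset.mul_sum, hz, hsum])

end Idempotents

open Fin.NatCast in
theorem mem_of_cyclic {L : Type*} [CommRing L] {σ : L →+* L} {l : ℕ} [NeZero l] {e : Fin l → L}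
    (hcyc : ∀ j, σ (e j) = e (j + 1)) {I : Ideal L} (hI : ∀ x ∈ I, σ x ∈ I) {j : Fin l}
    (hj : e j ∈ I) (m : Fin l) : e m ∈ I := by
  have hshift : ∀ k : ℕ, e (j + k) ∈ I := by
    intro k
    induction k with
    | zero => simpa using hj
    | succ k ih => simpa [hcyc, add_assoc] using hI _ ih
  simpa using hshift (m - j).val

end SigmaPseudoField

open SigmaPseudoField in
theorem sigma_pseudo_field_properties_general
    (L : Type*) [CommRing L] (σ : L →+* L)
    (l : ℕ) [NeZero l] (e : Fin l → L)
    (hsum : ∑ j, e j = 1)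
    (hcyc : ∀ j, σ (e j) = e (j + 1))
    (hfield : ∀ j, ∀ x : L, x * e j ≠ 0 → ∃ y : L, (x * e j) * (y * e j) = e j) :
    (∀ I : Ideal L, (∀ x ∈ I, σ x ∈ I) → I = ⊥ ∨ I = ⊤) ∧
    IsNoetherianRing L ∧
    (∀ x ∈ nonZeroDivisors L, IsUnit x) := by
  refine ⟨fun I hI => ?_, isNoetherianRing hfield hsum,
    fun x hx => isUnit_of_mem_nonZeroDivisors hfield hsum hx⟩
  refine or_iff_not_imp_left.mpr fun hbot => ?_
  obtain ⟨j, hj⟩ := exists_mem_of_ne_bot hfield hsum hbot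
  rw [Ideal.eq_top_iff_one, ← hsum]
  exact Ideal.sum_mem I fun m _ => mem_of_cyclic hcyc hI hj m

/-- A σ-pseudo field: if a commutative ring `L` with endomorphism `σ` admits a complete
system of orthogonal idempotents `e₀, …, e_{l-1}` permuted cyclically by `σ` with each
`eⱼL` a field, then `L` is σ-simple, Noetherian, and every non-zero divisor is a unit. -/
theorem sigma_pseudo_field_properties
    (L : Type*) [CommRing L] (σ : L →+* L)
    (l : ℕ) [NeZero l] (e : Fin l → L)
    (hidem : ∀ j, e j * e j = e j)
    (horth : ∀ j m, j ≠ m → e j * e m = 0)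
    (hsum : ∑ j, e j = 1)
    (hcyc : ∀ j, σ (e j) = e (j + 1))
    (hne : ∀ j, e j ≠ 0)
    (hfield : ∀ j, ∀ x : L, x * e j ≠ 0 → ∃ y : L, (x * e j) * (y * e j) = e j) :
    (∀ I : Ideal L, (∀ x ∈ I, σ x ∈ I) → I = ⊥ ∨ I = ⊤) ∧
    IsNoetherianRing L ∧
    (∀ x ∈ nonZeroDivisors L, IsUnit x) :=
  sigma_pseudo_field_properties_general L σ l e hsum hcyc hfield
end

section
/- Let k be a field of characteristic zero, let R ⊆ Seq_k be a subring decomposing as R = e₀R ⊕ ⋯ ⊕ e_{l-1}R where eⱼ is the indicator sequence of j + ℕl, and suppose each eⱼR is an integral domain whose nonzero elements become units in a common overring of R inside Seq_k. Then for every g ∈ R the set {i ∈ ℕ : g(i) = 0} is (up to a finite set) a finite union of arithmetic progressions, each of period l. -/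
/-!
On the residue class `j + ℕl` the germ `eⱼ g` is either zero or has an inverse modulo `eⱼ`.
In the first case `g` vanishes eventually on the class, in the second it is eventually nonzero
there. Hence, beyond some point, whether `g i = 0` depends only on `i mod l`, and the zero set
of `g` agrees up to a finite set with the union of the classes `j` for which `eⱼ g = 0`.
-/

open Filter

/-- The indicator sequence of the arithmetic progression `j + ℕl` (as a germ, i.e. of the
residue class `j mod l`). -/
noncomputable def indAP (k : Type*) [CommRing k] (l : ℕ) (j : Fin l) : SeqRing k :=
  ((fun i : ℕ => if i % l = (j : ℕ) then (1 : k) else 0) : SeqRing k)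

theorem finite_symmDiff_setOf_of_eventually_iff {p q : ℕ → Prop}
    (h : ∀ᶠ i in atTop, p i ↔ q i) : (symmDiff {i | p i} {i | q i}).Finite := by
  rw [← Nat.cofinite_eq_atTop, eventually_cofinite] at h
  refine h.subset fun i hi => ?_
  simp only [Set.mem_symmDiff, Set.mem_ofPred_eq] at hi ⊢
  tauto

theorem exists_finset_eventually_iff_exists_mod_eq {l : ℕ} [NeZero l] {p : ℕ → Prop}
    {P : Fin l → Prop} (h : ∀ j : Fin l, ∀ᶠ i in atTop, i % l = j → (p i ↔ P j)) :
    ∃ J : Finset (Fin l), ∀ᶠ i in atTop, p i ↔ ∃ j ∈ J, i % l = j := by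
  classical
  refine ⟨Finset.univ.filter P, ?_⟩
  filter_upwards [eventually_all.2 h] with i hi
  set r : Fin l := ⟨i % l, Nat.mod_lt i (NeZero.pos l)⟩
  have hmod : i % l = r := rfl
  rw [hi r hmod]
  constructor
  · exact fun hP => ⟨r, by simpa using hP, hmod⟩
  · rintro ⟨j, hj, hij⟩
    rw [hmod, Fin.val_inj] at hij
    simpa [hij] using hj

section IndAP

variable {k : Type*} [CommRing k] {l : ℕ} {j : Fin l} {g : ℕ → k}

theorem indAP_mul_coe :
    indAP k l j * (g : SeqRing k) =
      ((fun i => (if i % l = (j : ℕ) then (1 : k) else 0) * g i : ℕ → k) : SeqRing k) :=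
  rfl

theorem eventually_eq_zero_of_indAP_mul_eq_zero (h : indAP k l j * (g : SeqRing k) = 0) :
    ∀ᶠ i in atTop, i % l = j → g i = 0 := by
  rw [indAP_mul_coe, ← Germ.coe_zero, Germ.coe_eq] at h
  filter_upwards [h] with i hi hij
  simpa [hij] using hi

theorem eventually_ne_zero_of_indAP_mul_mul_eq_indAP [Nontrivial k] {y : SeqRing k}
    (h : indAP k l j * (g : SeqRing k) * y = indAP k l j) :
    ∀ᶠ i in atTop, i % l = j → g i ≠ 0 := by
  induction y using Germ.inductionOn with
  | h y =>
    rw [indAP_mul_coe, indAP, ← Germ.coe_mul, Germ.coe_eq] at h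
    filter_upwards [h] with i hi hij hgi
    simp [hij, hgi] at hi

theorem eventually_eq_zero_iff_indAP_mul_eq_zero [Nontrivial k]
    (hunit : indAP k l j * (g : SeqRing k) ≠ 0 →
      ∃ y : SeqRing k, indAP k l j * g * y = indAP k l j) :
    ∀ᶠ i in atTop, i % l = j → (g i = 0 ↔ indAP k l j * (g : SeqRing k) = 0) := by
  by_cases h0 : indAP k l j * (g : SeqRing k) = 0
  · filter_upwards [eventually_eq_zero_of_indAP_mul_eq_zero h0] with i hi hij
    simp [hi hij, h0]
  · obtain ⟨y, hy⟩ := hunit h0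
    filter_upwards [eventually_ne_zero_of_indAP_mul_mul_eq_indAP hy] with i hi hij
    simp [hi hij, h0]

end IndAP

theorem zero_set_of_elements_of_pv_ring_general (k : Type*) [Field k]
    (l : ℕ) [NeZero l] (R S : Subring (SeqRing k))
    (hunit : ∀ j : Fin l, ∀ x ∈ R, indAP k l j * x ≠ 0 →
      ∃ y ∈ S, (indAP k l j * x) * y = indAP k l j) :
    ∀ g : ℕ → k, (g : SeqRing k) ∈ R →
      ∃ J : Finset (Fin l),
        (symmDiff {i : ℕ | g i = 0} {i : ℕ | ∃ j ∈ J, i % l = (j : ℕ)}).Finite := by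
  intro g hg
  have hclass (j : Fin l) := eventually_eq_zero_iff_indAP_mul_eq_zero (j := j) fun hne =>
    (hunit j g hg hne).imp fun _ hy => hy.2
  obtain ⟨J, hJ⟩ := exists_finset_eventually_iff_exists_mod_eq hclass
  exact ⟨J, finite_symmDiff_setOf_of_eventually_iff hJ⟩

/-- If `R ⊆ Seq_k` decomposes as `R = e₀R ⊕ ⋯ ⊕ e_{l-1}R` with `eⱼ` the indicator of
`j + ℕl`, each `eⱼR` an integral domain whose nonzero elements become units in a common
overring `S` of `R` inside `Seq_k`, then the zero set of every `g ∈ R` is, up to a finite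
set, a finite union of arithmetic progressions of period `l`. -/
theorem zero_set_of_elements_of_pv_ring (k : Type*) [Field k] [CharZero k]
    (l : ℕ) [NeZero l] (R S : Subring (SeqRing k)) (hRS : R ≤ S)
    (he : ∀ j : Fin l, indAP k l j ∈ R)
    (hdom : ∀ j : Fin l, ∀ x ∈ R, ∀ y ∈ R,
      (indAP k l j * x) * (indAP k l j * y) = 0 → indAP k l j * x = 0 ∨ indAP k l j * y = 0)
    (hunit : ∀ j : Fin l, ∀ x ∈ R, indAP k l j * x ≠ 0 →
      ∃ y ∈ S, (indAP k l j * x) * y = indAP k l j) :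
    ∀ g : ℕ → k, (g : SeqRing k) ∈ R →
      ∃ J : Finset (Fin l),
        (symmDiff {i : ℕ | g i = 0} {i : ℕ | ∃ j ∈ J, i % l = (j : ℕ)}).Finite :=
  zero_set_of_elements_of_pv_ring_general k l R S hunit
end

section
/- Let k be a field of characteristic zero and f : ℕ → k a sequence satisfying, for all sufficiently large i, the recurrence f(i+n) + h_{n-1}(i)f(i+n-1) + ⋯ + h₀·f(i) = 0, where h₁, …, h_{n-1} ∈ k[z] are polynomials and h₀ ∈ k is a nonzero constant. Assume the Dynamical Mordell–Lang property holds for the automorphism σ(b, B) = (b+1, A(b)B) of X = 𝔸¹ × GLₙ over k, where A is the companion matrix of the recurrence (this is a theorem of Bell for polynomial automorphisms of affine varieties). Then the set {i ∈ ℕ : f(i) = 0} is, up to a finite set, a finite union of arithmetic progressions. -/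
/-!
Once the recurrence holds from `i₀` on, the companion matrix `A(j)` moves the window
`(f j, …, f (j + n - 1))` one step forward for `j ≥ i₀`. Starting `σ` at `(i₀, 1)`, the matrix
part of `σⁱ(i₀, 1)` therefore maps the window at `i₀` to the window at `i₀ + i`, so `f (i₀ + i)` is
a fixed linear polynomial in the coordinates of `σⁱ(i₀, 1)`. Dynamical Mordell–Lang makes its zero
set a finite union of arithmetic progressions, and shifting it by `i₀` recovers the zero set of
`f` away from the finitely many indices below `i₀`.
-/

open Filter Polynomial

/-- The arithmetic progression `{j + n·l : n ∈ ℕ}`. -/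
def ArithProg (j l : ℕ) : Set ℕ := {m | ∃ n : ℕ, m = j + n * l}

/-- A subset of `ℕ` is a finite union of arithmetic progressions. -/
def IsFinUnionAP (S : Set ℕ) : Prop :=
  ∃ s : Finset (ℕ × ℕ), S = ⋃ p ∈ s, ArithProg p.1 p.2

/-- The companion matrix `A(E)` of the difference equation with coefficients
`h₀, …, h_{n-1}`, evaluated at `b`. -/
noncomputable def companionAt {k : Type*} [Field k] {n : ℕ} (h : Fin n → Polynomial k)
    (b : k) : Matrix (Fin n) (Fin n) k :=
  Matrix.of fun r c : Fin n =>
    if (r : ℕ) + 1 = (c : ℕ) then 1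
    else if (r : ℕ) = n - 1 then -((h c).eval b) else 0

/-- The automorphism `σ(b, B) = (b+1, A(b)·B)` of `𝔸¹ × GLₙ` (on `k`-points). -/
noncomputable def dynStep {k : Type*} [Field k] {n : ℕ} (h : Fin n → Polynomial k)
    (x : k × Matrix (Fin n) (Fin n) k) : k × Matrix (Fin n) (Fin n) k :=
  (x.1 + 1, companionAt h x.1 * x.2)

lemma IsFinUnionAP.image_add {S : Set ℕ} (hS : IsFinUnionAP S) (a : ℕ) :
    IsFinUnionAP ((a + ·) '' S) := by
  obtain ⟨s, rfl⟩ := hS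
  refine ⟨s.image fun p => (a + p.1, p.2), ?_⟩
  ext m
  simp only [Set.mem_image, Set.mem_iUnion, Finset.mem_image, ArithProg, Set.mem_ofPred_eq]
  constructor
  · rintro ⟨x, ⟨p, hp, n, rfl⟩, rfl⟩
    exact ⟨_, ⟨p, hp, rfl⟩, n, by ring⟩
  · rintro ⟨q, ⟨p, hp, rfl⟩, n, rfl⟩
    exact ⟨_, ⟨p, hp, n, rfl⟩, by ring⟩

lemma Nat.finite_symmDiff_image_add_preimage (Z : Set ℕ) (a : ℕ) :
    (symmDiff Z ((a + ·) '' ((a + ·) ⁻¹' Z))).Finite := by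
  refine (Set.finite_Iio a).subset fun i hi => ?_
  by_contra! hai
  rw [Set.image_preimage_eq_inter_range, Set.mem_symmDiff] at hi
  have : i ∈ Set.range (a + ·) := ⟨i - a, Nat.add_sub_cancel' (not_lt.1 hai)⟩
  simp only [Set.mem_inter_iff, this] at hi
  tauto

section Companion

open Matrix

variable {k : Type*} [Field k] {n : ℕ} (h : Fin n → k[X])

lemma companionAt_mulVec_window {f : ℕ → k} {i : ℕ}
    (hi : f (i + n) + ∑ m : Fin n, (h m).eval (i : k) * f (i + m) = 0) :
    companionAt h (i : k) *ᵥ (fun c : Fin n => f (i + c)) = fun c : Fin n => f (i + 1 + c) := by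
  ext r
  simp only [mulVec, dotProduct, companionAt, of_apply, ite_mul, one_mul, zero_mul]
  by_cases hr : (r : ℕ) + 1 < n
  · rw [Finset.sum_eq_single ⟨r + 1, hr⟩ (fun c _ hc => ?_) (by simp)]
    · simp [add_assoc, add_comm 1]
    · have : (r : ℕ) + 1 ≠ c := fun hrc => hc (Fin.ext hrc.symm)
      simp [this, show (r : ℕ) ≠ n - 1 by omega]
  · have hnr : ∀ c : Fin n, (r : ℕ) + 1 ≠ c := fun c => by omega
    simp only [hnr, if_false]
    simp only [show (r : ℕ) = n - 1 by omega, if_true, neg_mul, Finset.sum_neg_distrib]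
    rw [show i + 1 + (n - 1) = i + n by omega]
    linear_combination -hi

lemma dynStep_iterate_fst (x : k × Matrix (Fin n) (Fin n) k) (i : ℕ) :
    ((dynStep h)^[i] x).1 = x.1 + i := by
  induction i with
  | zero => simp
  | succ i ih => rw [Function.iterate_succ_apply', dynStep, ih]; push_cast; ring

lemma dynStep_iterate_mulVec_window {f : ℕ → k} {i₀ : ℕ}
    (hrec : ∀ i ≥ i₀, f (i + n) + ∑ m : Fin n, (h m).eval (i : k) * f (i + m) = 0) (i : ℕ) :
    ((dynStep h)^[i] ((i₀ : k), 1)).2 *ᵥ (fun c : Fin n => f (i₀ + c)) =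
      fun c : Fin n => f (i₀ + i + c) := by
  induction i with
  | zero => simp
  | succ i ih =>
    rw [Function.iterate_succ_apply', dynStep, ← Matrix.mulVec_mulVec, ih,
      dynStep_iterate_fst, ← Nat.cast_add, companionAt_mulVec_window h (hrec _ (by omega))]
    rfl

end Companion

theorem skolem_mahler_lech_polynomial_coeffs_general
    (k : Type*) [Field k] (n : ℕ) [NeZero n]
    (h : Fin n → Polynomial k)
    (f : ℕ → k)
    (hrec : ∀ᶠ i in Filter.atTop,
      f (i + n) + ∑ m : Fin n, (h m).eval ((i : ℕ) : k) * f (i + (m : ℕ)) = 0)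
    (hDML : ∀ x : k × Matrix (Fin n) (Fin n) k, IsUnit x.2.det →
      ∀ S : Finset (MvPolynomial (Unit ⊕ Fin n × Fin n) k),
        IsFinUnionAP {i : ℕ | ∀ p ∈ S,
          MvPolynomial.eval
            (Sum.elim (fun _ : Unit => ((dynStep h)^[i] x).1)
              (fun rc : Fin n × Fin n => ((dynStep h)^[i] x).2 rc.1 rc.2)) p = 0}) :
    ∃ U : Set ℕ, IsFinUnionAP U ∧ (symmDiff {i : ℕ | f i = 0} U).Finite := by
  obtain ⟨i₀, hi₀⟩ := eventually_atTop.1 hrec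
  let p : MvPolynomial (Unit ⊕ Fin n × Fin n) k :=
    ∑ c : Fin n, MvPolynomial.C (f (i₀ + c)) * MvPolynomial.X (Sum.inr (0, c))
  have hzeros : {i : ℕ | ∀ q ∈ ({p} : Finset _),
      MvPolynomial.eval
        (Sum.elim (fun _ : Unit => ((dynStep h)^[i] ((i₀ : k), 1)).1)
          (fun rc : Fin n × Fin n => ((dynStep h)^[i] ((i₀ : k), 1)).2 rc.1 rc.2)) q = 0}
      = (i₀ + ·) ⁻¹' {i | f i = 0} := by
    ext i
    have := congrFun (dynStep_iterate_mulVec_window h hi₀ i) 0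
    simp only [Matrix.mulVec, dotProduct, Fin.val_zero, add_zero] at this
    simp [p, ← this, mul_comm]
  have hAP := hDML ((i₀ : k), 1) (by simp) {p}
  rw [hzeros] at hAP
  exact ⟨_, hAP.image_add i₀, Nat.finite_symmDiff_image_add_preimage _ i₀⟩

/-- Skolem-Mahler-Lech with polynomial coefficients and constant `h₀`: if `f : ℕ → k`
eventually satisfies `f(i+n) + h_{n-1}(i)f(i+n-1) + ⋯ + h₀f(i) = 0` with
`h₁, …, h_{n-1} ∈ k[z]` and `h₀ ∈ k∖{0}`, and the Dynamical Mordell-Lang property holds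
for the automorphism `σ(b,B) = (b+1, A(b)B)` of `𝔸¹ × GLₙ` (Bell's theorem), then the zero
set of `f` is, up to a finite set, a finite union of arithmetic progressions. -/
theorem skolem_mahler_lech_polynomial_coeffs
    (k : Type*) [Field k] [CharZero k] (n : ℕ) [NeZero n]
    (h : Fin n → Polynomial k) (h0 : k) (hh0 : h0 ≠ 0)
    (hconst : h 0 = Polynomial.C h0)
    (f : ℕ → k)
    (hrec : ∀ᶠ i in Filter.atTop,
      f (i + n) + ∑ m : Fin n, (h m).eval ((i : ℕ) : k) * f (i + (m : ℕ)) = 0)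
    (hDML : ∀ x : k × Matrix (Fin n) (Fin n) k, IsUnit x.2.det →
      ∀ S : Finset (MvPolynomial (Unit ⊕ Fin n × Fin n) k),
        IsFinUnionAP {i : ℕ | ∀ p ∈ S,
          MvPolynomial.eval
            (Sum.elim (fun _ : Unit => ((dynStep h)^[i] x).1)
              (fun rc : Fin n × Fin n => ((dynStep h)^[i] x).2 rc.1 rc.2)) p = 0}) :
    ∃ U : Set ℕ, IsFinUnionAP U ∧ (symmDiff {i : ℕ | f i = 0} U).Finite :=
  skolem_mahler_lech_polynomial_coeffs_general k n h f hrec hDML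
end
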